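/- arXiv:1404.7598 — 5 statements merged into one kernel-verified Lean document; each statement's English description precedes it below -/
import Mathlib

section
/- Let γ ∈ (0, 1/2). Then for every x ∈ ℝ, ∫₀^∞ min(|x·γ·t^{γ−1}|, |x·γ·t^{γ−1}|²) dt = C·|x|^{1/(1−γ)}, where C = γ^{1/(1−γ)}·(γ^{−1} + (1−2γ)^{−1}). -/
/-! The substitution `t = c s` with `c ^ (γ - 1) = |x| γ` scales the kernel to `s ^ (γ - 1)` and
pulls out the factor `(|x| γ) ^ (1 / (1 - γ))`. For the scaled kernel the minimum switches from
`s ^ (γ - 1)` to `s ^ (2 (γ - 1))` at `s = 1`, and the two pieces integrate to `γ⁻¹` on `(0, 1]`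
and `(1 - 2 γ)⁻¹` on `(1, ∞)`. -/

open MeasureTheory Set

lemma integral_Ioi_comp_const_mul_rpow {E : Type*} [NormedAddCommGroup E] [NormedSpace ℝ E]
    (g : ℝ → E) {a p : ℝ} (ha : 0 < a) (hp : p ≠ 0) :
    ∫ t in Ioi 0, g (a * t ^ p) = a ^ (-p⁻¹) • ∫ s in Ioi 0, g (s ^ p) := by
  have hc : 0 < a ^ p⁻¹ := Real.rpow_pos_of_pos ha _
  have hscale : EqOn (fun t ↦ g (a * t ^ p)) (fun t ↦ g ((a ^ p⁻¹ * t) ^ p)) (Ioi 0) := by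
    intro t ht
    dsimp only
    rw [Real.mul_rpow hc.le ht.le, ← Real.rpow_mul ha.le, inv_mul_cancel₀ hp,
      Real.rpow_one]
  rw [setIntegral_congr_fun measurableSet_Ioi hscale,
    integral_comp_mul_left_Ioi (fun s ↦ g (s ^ p)) 0 hc, mul_zero, ← Real.rpow_neg ha.le]

lemma min_rpow_sq_eqOn_Ioc {p : ℝ} (hp : p ≤ 0) :
    EqOn (fun s : ℝ ↦ min (s ^ p) ((s ^ p) ^ 2)) (fun s ↦ s ^ p) (Ioc 0 1) := by
  intro s ⟨hs0, hs1⟩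
  exact min_eq_left (le_self_pow₀ (Real.one_le_rpow_of_pos_of_le_one_of_nonpos hs0 hs1 hp)
    two_ne_zero)

lemma min_rpow_sq_eqOn_Ioi {p : ℝ} (hp : p ≤ 0) :
    EqOn (fun s : ℝ ↦ min (s ^ p) ((s ^ p) ^ 2)) (fun s ↦ s ^ (2 * p)) (Ioi 1) := by
  intro s hs
  have hs0 : 0 ≤ s := zero_le_one.trans hs.le
  dsimp only
  rw [min_eq_right (pow_le_of_le_one (by positivity)
      (Real.rpow_le_one_of_one_le_of_nonpos hs.le hp) two_ne_zero),
    ← Real.rpow_natCast, ← Real.rpow_mul hs0, mul_comm, Nat.cast_ofNat]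

lemma integral_Ioi_min_rpow_sq {p : ℝ} (hp1 : -1 < p) (hp2 : p < -1 / 2) :
    ∫ s in Ioi 0, min (s ^ p) ((s ^ p) ^ 2) = (p + 1)⁻¹ - (2 * p + 1)⁻¹ := by
  have hp : p ≤ 0 := by linarith
  have hint_near : IntegrableOn (fun s : ℝ ↦ s ^ p) (Ioc 0 1) :=
    (intervalIntegrable_iff_integrableOn_Ioc_of_le zero_le_one).mp
      (intervalIntegral.intervalIntegrable_rpow' hp1)
  have hint_far : IntegrableOn (fun s : ℝ ↦ s ^ (2 * p)) (Ioi 1) :=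
    integrableOn_Ioi_rpow_of_lt (by linarith) zero_lt_one
  have hnear : ∫ s in Ioc 0 1, s ^ p = (p + 1)⁻¹ := by
    rw [← intervalIntegral.integral_of_le zero_le_one, integral_rpow (Or.inl hp1),
      Real.one_rpow, Real.zero_rpow (by linarith), sub_zero, one_div]
  have hfar : ∫ s in Ioi 1, s ^ (2 * p) = -(2 * p + 1)⁻¹ := by
    rw [integral_Ioi_rpow_of_lt (by linarith) zero_lt_one, Real.one_rpow, neg_div, one_div]
  rw [← Ioc_union_Ioi_eq_Ioi zero_le_one,
    setIntegral_union Ioc_disjoint_Ioi_same measurableSet_Ioi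
      (hint_near.congr_fun (min_rpow_sq_eqOn_Ioc hp).symm measurableSet_Ioc)
      (hint_far.congr_fun (min_rpow_sq_eqOn_Ioi hp).symm measurableSet_Ioi),
    setIntegral_congr_fun measurableSet_Ioc (min_rpow_sq_eqOn_Ioc hp),
    setIntegral_congr_fun measurableSet_Ioi (min_rpow_sq_eqOn_Ioi hp), hnear, hfar, sub_eq_add_neg]

theorem fractional_kernel_integral
    (γ : ℝ) (hγ : γ ∈ Set.Ioo (0:ℝ) (1/2)) :
    ∀ x : ℝ,
      ∫ t in Set.Ioi (0:ℝ), min |x * (γ * t ^ (γ - 1))| (|x * (γ * t ^ (γ - 1))| ^ 2)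
        = (γ ^ (1 / (1 - γ)) * (γ⁻¹ + (1 - 2 * γ)⁻¹)) * |x| ^ (1 / (1 - γ)) := by
  obtain ⟨hγ0, hγ2⟩ := hγ
  intro x
  rcases eq_or_ne x 0 with rfl | hx
  · simp [Real.zero_rpow (inv_ne_zero (by linarith : (1:ℝ) - γ ≠ 0))]
  have ha : 0 < |x| * γ := mul_pos (abs_pos.mpr hx) hγ0
  have habs : EqOn (fun t : ℝ ↦ min |x * (γ * t ^ (γ - 1))| (|x * (γ * t ^ (γ - 1))| ^ 2))
      (fun t ↦ (fun u ↦ min u (u ^ 2)) ((|x| * γ) * t ^ (γ - 1))) (Ioi 0) := by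
    intro t ht
    dsimp only
    rw [abs_mul, abs_mul, abs_of_pos hγ0, abs_of_pos (Real.rpow_pos_of_pos ht _), mul_assoc]
  rw [setIntegral_congr_fun measurableSet_Ioi habs,
    integral_Ioi_comp_const_mul_rpow (fun u ↦ min u (u ^ 2)) ha (by linarith : γ - 1 ≠ 0),
    integral_Ioi_min_rpow_sq (by linarith) (by linarith), smul_eq_mul,
    show -(γ - 1)⁻¹ = 1 / (1 - γ) by rw [neg_inv, neg_sub, one_div],
    Real.mul_rpow (abs_nonneg x) hγ0.le]
  have hconst : (γ - 1 + 1)⁻¹ - (2 * (γ - 1) + 1)⁻¹ = γ⁻¹ + (1 - 2 * γ)⁻¹ := by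
    rw [sub_eq_add_neg, neg_inv]; ring_nf
  rw [hconst]; ring
end

section
/- Let v < 0 and x ∈ ℝ. Then ∫₀^∞ min(|x·v·e^{vt}|, |x·v·e^{vt}|²) dt = (|xv|²/(2|v|))·1_{|xv|≤1} + ((|xv| − 1/2)/|v|)·1_{|xv|>1}. -/
/-
With `a = |x v|`, the integrand is `min(y, y²)` for `y = a e^{vt}`, which decreases from `a` to `0`.
Where `y ≤ 1` the integrand is `a² e^{2vt}`, which integrates over `(c, ∞)` to `(a e^{vc})² / (2|v|)`;
where `y ≥ 1` it is `a e^{vt}`. If `a ≤ 1` the whole half-line is of the first kind; otherwise split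
at `t₀ = log a / |v|`, where `a e^{v t₀} = 1`.
-/

open MeasureTheory Real Set

noncomputable def minSq (y : ℝ) : ℝ := min y (y ^ 2)

lemma minSq_of_le_one {y : ℝ} (h0 : 0 ≤ y) (h1 : y ≤ 1) : minSq y = y ^ 2 :=
  min_eq_right (by nlinarith)

lemma minSq_of_one_le {y : ℝ} (h1 : 1 ≤ y) : minSq y = y :=
  min_eq_left (by nlinarith)

lemma continuous_minSq : Continuous minSq := by
  unfold minSq
  fun_prop

section ExpKernel

variable {a v c : ℝ}

lemma mul_exp_mul_le_of_le {t : ℝ} (ha : 0 ≤ a) (hv : v ≤ 0) (hct : c ≤ t) :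
    a * exp (v * t) ≤ a * exp (v * c) :=
  mul_le_mul_of_nonneg_left (exp_le_exp.2 (mul_le_mul_of_nonpos_left hct hv)) ha

lemma minSq_mul_exp_eqOn_Ioi (ha : 0 ≤ a) (hv : v ≤ 0) (hc : a * exp (v * c) ≤ 1) :
    EqOn (fun t => minSq (a * exp (v * t))) (fun t => a ^ 2 * exp ((2 * v) * t)) (Ioi c) := by
  intro t ht
  have hle := mul_exp_mul_le_of_le ha hv (le_of_lt ht)
  dsimp only
  rw [minSq_of_le_one (by positivity) (hle.trans hc), mul_pow, ← exp_nat_mul]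
  ring_nf

lemma minSq_mul_exp_eqOn_Ioc {d : ℝ} (ha : 0 ≤ a) (hv : v ≤ 0) (hd : 1 ≤ a * exp (v * d)) :
    EqOn (fun t => minSq (a * exp (v * t))) (fun t => a * exp (v * t)) (Ioc c d) :=
  fun _ ht => minSq_of_one_le (hd.trans (mul_exp_mul_le_of_le ha hv ht.2))

lemma integrableOn_minSq_mul_exp_Ioi (ha : 0 ≤ a) (hv : v < 0) (hc : a * exp (v * c) ≤ 1) :
    IntegrableOn (fun t => minSq (a * exp (v * t))) (Ioi c) :=
  IntegrableOn.congr_fun ((integrableOn_exp_mul_Ioi (by linarith) c).const_mul (a ^ 2))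
    (minSq_mul_exp_eqOn_Ioi ha hv.le hc).symm measurableSet_Ioi

lemma integral_minSq_mul_exp_Ioi (ha : 0 ≤ a) (hv : v < 0) (hc : a * exp (v * c) ≤ 1) :
    ∫ t in Ioi c, minSq (a * exp (v * t)) = (a * exp (v * c)) ^ 2 / (2 * |v|) := by
  rw [setIntegral_congr_fun measurableSet_Ioi (minSq_mul_exp_eqOn_Ioi ha hv.le hc),
    integral_const_mul, integral_exp_mul_Ioi (by linarith), abs_of_neg hv, mul_pow,
    ← exp_nat_mul]
  field_simp
  ring_nf

lemma integral_minSq_mul_exp_Ioc {d : ℝ} (ha : 0 ≤ a) (hv : v < 0) (hcd : c ≤ d)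
    (hd : 1 ≤ a * exp (v * d)) :
    ∫ t in Ioc c d, minSq (a * exp (v * t)) = (a * exp (v * c) - a * exp (v * d)) / |v| := by
  rw [setIntegral_congr_fun measurableSet_Ioc (minSq_mul_exp_eqOn_Ioc ha hv.le hd),
    ← intervalIntegral.integral_of_le hcd, intervalIntegral.integral_const_mul,
    intervalIntegral.integral_comp_mul_left (fun t => exp t) hv.ne, integral_exp,
    abs_of_neg hv, smul_eq_mul]
  field_simp
  ring

end ExpKernel

theorem supOU_kernel_integral
    (v x : ℝ) (hv : v < 0) :
    ∫ t in Set.Ioi (0:ℝ),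
        min |x * v * Real.exp (v * t)| (|x * v * Real.exp (v * t)| ^ 2)
      = (if |x * v| ≤ 1 then |x * v| ^ 2 / (2 * |v|) else 0)
        + (if 1 < |x * v| then (|x * v| - 1/2) / |v| else 0) := by
  simp_rw [abs_mul _ (exp _), abs_exp]
  change ∫ t in Ioi 0, minSq (|x * v| * exp (v * t)) = _
  set a := |x * v|
  have ha : 0 ≤ a := abs_nonneg _
  rcases le_or_gt a 1 with ha1 | ha1
  · rw [integral_minSq_mul_exp_Ioi ha hv (by simpa using ha1), if_pos ha1, if_neg ha1.not_gt]
    simp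
  · set t₀ := log a / -v
    have ht₀ : 0 ≤ t₀ := div_nonneg (log_nonneg ha1.le) (by linarith)
    have hat₀ : a * exp (v * t₀) = 1 := by
      have hvt₀ : v * t₀ = -log a := by
        simp only [t₀]
        field_simp [hv.ne]
      rw [hvt₀, exp_neg, exp_log (by linarith), mul_inv_cancel₀ (by positivity)]
    have hcont : Continuous fun t => minSq (a * exp (v * t)) :=
      continuous_minSq.comp (by fun_prop)
    rw [← Ioc_union_Ioi_eq_Ioi ht₀, setIntegral_union (Ioc_disjoint_Ioi le_rfl) measurableSet_Ioi
      hcont.integrableOn_Ioc (integrableOn_minSq_mul_exp_Ioi ha hv hat₀.le),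
      integral_minSq_mul_exp_Ioc ha hv ht₀ hat₀.ge, integral_minSq_mul_exp_Ioi ha hv hat₀.le, hat₀,
      if_neg ha1.not_ge, if_pos ha1]
    simp only [mul_zero, exp_zero, mul_one]
    field_simp
    ring
end

section
/- A bounded real-valued random variable which is not almost surely constant is not infinitely divisible. -/
open MeasureTheory ProbabilityTheory

/-- A real random variable is infinitely divisible if for every `n ≥ 1` it is
distributed as the sum of `n` i.i.d. random variables (on some probability space). -/
def IsInfinitelyDivisibleRV {Ω : Type*} [MeasurableSpace Ω] (P : Measure Ω)
    (X : Ω → ℝ) : Prop :=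
  ∀ n : ℕ, 1 ≤ n →
    ∃ (Ω' : Type) (_ : MeasurableSpace Ω') (Q : Measure Ω') (_ : IsProbabilityMeasure Q)
      (Y : Fin n → Ω' → ℝ),
        iIndepFun Y Q ∧
        (∀ i j : Fin n, IdentDistrib (Y i) (Y j) Q Q) ∧
        IdentDistrib X (fun ω' => ∑ i, Y i ω') P Q

/-!
If `X` is distributed as a sum of `n` i.i.d. summands and `|X| ≤ C` almost surely, then every
summand satisfies `|Yᵢ| ≤ C / n` almost surely: were `Yᵢ > C / n` with probability `p > 0`, all
`n` summands would exceed `C / n` simultaneously with probability `pⁿ > 0`, forcing the sum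
above `C`. Hence `Var X = n Var Y₁ ≤ n (C / n)² = C² / n` for every `n`, so `Var X = 0` and `X`
is almost surely constant.
-/

open Filter

namespace ProbabilityTheory

variable {Ω ι : Type*} [MeasurableSpace Ω] {μ : Measure Ω} [Fintype ι] {Y : ι → Ω → ℝ}

lemma iIndepFun.measure_iInter_preimage_eq_pow (hind : iIndepFun Y μ)
    (hid : ∀ i j, IdentDistrib (Y i) (Y j) μ μ) (i : ι) {s : Set ℝ} (hs : MeasurableSet s) :
    μ (⋂ j, Y j ⁻¹' s) = μ (Y i ⁻¹' s) ^ Fintype.card ι := by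
  rw [hind.meas_iInter fun j ↦ ⟨s, hs, rfl⟩, ← Finset.card_univ, ← Finset.prod_const]
  exact Finset.prod_congr rfl fun j _ ↦ (hid j i).measure_mem_eq hs

variable [Nonempty ι]

lemma iIndepFun.ae_le_div_card_of_ae_sum_le (hind : iIndepFun Y μ)
    (hid : ∀ i j, IdentDistrib (Y i) (Y j) μ μ) {C : ℝ} (hsum : ∀ᵐ ω ∂μ, ∑ i, Y i ω ≤ C)
    (i : ι) : ∀ᵐ ω ∂μ, Y i ω ≤ C / Fintype.card ι := by
  have hn : (0 : ℝ) < Fintype.card ι := by exact_mod_cast Fintype.card_pos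
  have hsub : (⋂ j, Y j ⁻¹' Set.Ioi (C / Fintype.card ι)) ⊆ {ω | ¬ ∑ j, Y j ω ≤ C} := by
    intro ω hω
    simp only [Set.mem_iInter, Set.mem_preimage, Set.mem_Ioi] at hω
    have hlt := Finset.sum_lt_sum_of_nonempty Finset.univ_nonempty fun j _ ↦ hω j
    rw [Finset.sum_const, Finset.card_univ, nsmul_eq_mul, mul_div_cancel₀ _ hn.ne'] at hlt
    exact not_le.mpr hlt
  have hnull : μ (Y i ⁻¹' Set.Ioi (C / Fintype.card ι)) ^ Fintype.card ι = 0 := by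
    rw [← hind.measure_iInter_preimage_eq_pow hid i measurableSet_Ioi]
    exact measure_mono_null hsub (ae_iff.mp hsum)
  rw [ae_iff]
  simp only [not_le]
  exact (pow_eq_zero_iff Fintype.card_ne_zero).mp hnull

lemma iIndepFun.ae_abs_le_div_card_of_ae_abs_sum_le (hind : iIndepFun Y μ)
    (hid : ∀ i j, IdentDistrib (Y i) (Y j) μ μ) {C : ℝ} (hsum : ∀ᵐ ω ∂μ, |∑ i, Y i ω| ≤ C)
    (i : ι) : ∀ᵐ ω ∂μ, |Y i ω| ≤ C / Fintype.card ι := by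
  have hupper := hind.ae_le_div_card_of_ae_sum_le hid (hsum.mono fun _ h ↦ (abs_le.mp h).2) i
  have hlower := (hind.comp (fun _ ↦ Neg.neg) fun _ ↦ measurable_neg).ae_le_div_card_of_ae_sum_le
    (fun j k ↦ (hid j k).comp measurable_neg)
    (hsum.mono fun _ h ↦ by simpa [Finset.sum_neg_distrib] using neg_le.mpr (abs_le.mp h).1) i
  filter_upwards [hupper, hlower] with ω hle hge
  exact abs_le.mpr ⟨neg_le.mpr hge, hle⟩

lemma iIndepFun.variance_sum_le_of_ae_abs_sum_le [IsProbabilityMeasure μ] (hind : iIndepFun Y μ)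
    (hid : ∀ i j, IdentDistrib (Y i) (Y j) μ μ) {C : ℝ} (hsum : ∀ᵐ ω ∂μ, |∑ i, Y i ω| ≤ C) :
    Var[fun ω ↦ ∑ i, Y i ω; μ] ≤ C ^ 2 / Fintype.card ι := by
  have hbdd i : ∀ᵐ ω ∂μ, Y i ω ∈ Set.Icc (-(C / Fintype.card ι)) (C / Fintype.card ι) :=
    (hind.ae_abs_le_div_card_of_ae_abs_sum_le hid hsum i).mono fun _ h ↦ abs_le.mp h
  have hmeas i : AEMeasurable (Y i) μ := (hid i i).aemeasurable_fst
  have hvar i : Var[Y i; μ] ≤ (C / Fintype.card ι) ^ 2 := by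
    simpa using variance_le_sq_of_bounded (hbdd i) (hmeas i)
  calc Var[fun ω ↦ ∑ i, Y i ω; μ]
      = ∑ i, Var[Y i; μ] := by
        rw [← Finset.sum_fn]
        exact IndepFun.variance_sum (fun i _ ↦ memLp_of_bounded (hbdd i)
          (hmeas i).aestronglyMeasurable 2) fun i _ j _ hij ↦ hind.indepFun hij
    _ ≤ ∑ _i : ι, (C / Fintype.card ι) ^ 2 := Finset.sum_le_sum fun i _ ↦ hvar i
    _ = C ^ 2 / Fintype.card ι := by
        have hn : (Fintype.card ι : ℝ) ≠ 0 := by exact_mod_cast Fintype.card_ne_zero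
        rw [Finset.sum_const, Finset.card_univ, nsmul_eq_mul]
        field_simp

end ProbabilityTheory

section InfinitelyDivisible

variable {Ω : Type*} [MeasurableSpace Ω] {P : Measure Ω} {X : Ω → ℝ} {C : ℝ}

lemma IsInfinitelyDivisibleRV.variance_le_sq_div (hdiv : IsInfinitelyDivisibleRV P X)
    (hC : ∀ᵐ ω ∂P, |X ω| ≤ C) {n : ℕ} (hn : 1 ≤ n) : Var[X; P] ≤ C ^ 2 / n := by
  obtain ⟨Ω', _, Q, _, Y, hind, hid, hXY⟩ := hdiv n hn
  have : Nonempty (Fin n) := ⟨⟨0, hn⟩⟩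
  have hsum : ∀ᵐ ω' ∂Q, |∑ i, Y i ω'| ≤ C :=
    hXY.ae_snd (p := fun x ↦ |x| ≤ C) (measurableSet_le (by fun_prop) (by fun_prop)) hC
  rw [hXY.variance_eq]
  simpa using hind.variance_sum_le_of_ae_abs_sum_le hid hsum

lemma IsInfinitelyDivisibleRV.variance_eq_zero (hdiv : IsInfinitelyDivisibleRV P X)
    (hC : ∀ᵐ ω ∂P, |X ω| ≤ C) : Var[X; P] = 0 := by
  refine le_antisymm ?_ (variance_nonneg X P)
  refine ge_of_tendsto (tendsto_const_div_atTop_nhds_zero_nat (C ^ 2)) ?_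
  filter_upwards [eventually_ge_atTop 1] with n hn using hdiv.variance_le_sq_div hC hn

end InfinitelyDivisible

theorem bounded_nonconstant_not_infinitely_divisible
    {Ω : Type*} [MeasurableSpace Ω] (P : Measure Ω) [IsProbabilityMeasure P]
    (X : Ω → ℝ) (hX : Measurable X)
    (hbdd : ∃ C : ℝ, ∀ᵐ ω ∂P, |X ω| ≤ C)
    (hnc : ¬ ∃ c : ℝ, ∀ᵐ ω ∂P, X ω = c) :
    ¬ IsInfinitelyDivisibleRV P X := by
  obtain ⟨C, hC⟩ := hbdd
  intro hdiv
  have hL2 : MemLp X 2 P :=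
    memLp_of_bounded (hC.mono fun _ h ↦ abs_le.mp h) hX.aestronglyMeasurable 2
  exact hnc ⟨P[X], ae_eq_integral_of_variance_eq_zero hL2 (hdiv.variance_eq_zero hC)⟩
end

section
/- Define g(y) = ( −e^{−y}·Φ(y−1) + e^{y}·(1 − Φ(y+1)) ) / ( e^{−y}·Φ(y−1) + e^{y}·(1 − Φ(y+1)) ) for y ∈ ℝ, where Φ is the standard normal CDF. Then g is bounded on ℝ, |g(y)| < 1 for all y, and lim_{y→+∞} g(y) = −1 and lim_{y→−∞} g(y) = 1. -/
/-
Put a(y) = e^{-y} Φ(y - 1) and b(y) = e^{y} (1 - Φ(y + 1)). Both are positive and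
g = (b - a) / (a + b), so |g| < 1. The symmetry Φ(-x) = 1 - Φ(x) exchanges a(-y) and b(y),
so g is odd and the limit at -∞ follows from the one at +∞. Multiplying through by e^{y},
g(y) = (e^{2y} (1 - Φ(y + 1)) - Φ(y - 1)) / (Φ(y - 1) + e^{2y} (1 - Φ(y + 1))), and the
Gaussian tail 1 - Φ(t) is O(e^{-3t}) because x²/2 ≥ 3x - 9/2; hence g(y) → -1 as y → +∞.
-/

open MeasureTheory Real Filter Set ProbabilityTheory Topology
open scoped NNReal

lemma gaussianPDFReal_zero_one (x : ℝ) :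
    gaussianPDFReal 0 1 x = (2 * π)⁻¹ ^ ((1 : ℝ) / 2) * exp (-x ^ 2 / 2) := by
  rw [gaussianPDFReal, NNReal.coe_one, mul_one, mul_one, sub_zero, sqrt_eq_rpow,
    inv_rpow (by positivity)]

lemma gaussianPDFReal_neg (μ : ℝ) (v : ℝ≥0) (x : ℝ) :
    gaussianPDFReal μ v (-x) = gaussianPDFReal (-μ) v x := by
  rw [gaussianPDFReal, gaussianPDFReal, show -x - μ = -(x - -μ) by ring, neg_sq]

lemma setIntegral_gaussianPDFReal_pos (μ : ℝ) {v : ℝ≥0} (hv : v ≠ 0) {s : Set ℝ}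
    (hs : 0 < volume s) : 0 < ∫ x in s, gaussianPDFReal μ v x := by
  rw [setIntegral_pos_iff_support_of_nonneg_ae
    (.of_forall (gaussianPDFReal_nonneg μ v)) (integrable_gaussianPDFReal μ v).integrableOn,
    Function.support_eq_univ (fun x => (gaussianPDFReal_pos μ v x hv).ne'), univ_inter]
  exact hs

noncomputable def stdNormalCDF (y : ℝ) : ℝ := ∫ x in Iic y, gaussianPDFReal 0 1 x

lemma one_sub_stdNormalCDF (y : ℝ) :
    1 - stdNormalCDF y = ∫ x in Ioi y, gaussianPDFReal 0 1 x := by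
  rw [← integral_gaussianPDFReal_eq_one 0 one_ne_zero, stdNormalCDF,
    ← intervalIntegral.integral_Iic_add_Ioi (integrable_gaussianPDFReal 0 1).integrableOn
      (integrable_gaussianPDFReal 0 1).integrableOn, add_sub_cancel_left]

lemma stdNormalCDF_pos (y : ℝ) : 0 < stdNormalCDF y :=
  setIntegral_gaussianPDFReal_pos 0 one_ne_zero (by simp)

lemma stdNormalCDF_lt_one (y : ℝ) : stdNormalCDF y < 1 := by
  have h := setIntegral_gaussianPDFReal_pos 0 one_ne_zero (s := Ioi y) (by simp)
  rw [← one_sub_stdNormalCDF] at h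
  linarith

lemma stdNormalCDF_neg (y : ℝ) : stdNormalCDF (-y) = 1 - stdNormalCDF y := by
  rw [one_sub_stdNormalCDF, stdNormalCDF, ← neg_neg y, ← integral_comp_neg_Iic, neg_neg]
  simp_rw [gaussianPDFReal_neg, neg_zero]

lemma gaussianPDFReal_zero_one_le (x : ℝ) :
    gaussianPDFReal 0 1 x ≤ exp (9 / 2) * exp (-3 * x) := by
  have hc : (√(2 * π * (1 : ℝ≥0)))⁻¹ ≤ 1 := by
    refine inv_le_one_of_one_le₀ (one_le_sqrt.2 ?_)
    push_cast
    linarith [pi_gt_three]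
  calc gaussianPDFReal 0 1 x ≤ 1 * exp (-(x - 0) ^ 2 / (2 * (1 : ℝ≥0))) :=
        mul_le_mul_of_nonneg_right hc (exp_pos _).le
    _ ≤ exp (9 / 2) * exp (-3 * x) := by
        rw [one_mul, ← exp_add, exp_le_exp]
        push_cast
        nlinarith [sq_nonneg (x - 3)]

lemma one_sub_stdNormalCDF_le (t : ℝ) : 1 - stdNormalCDF t ≤ exp (9 / 2) * exp (-3 * t) := by
  have hint : IntegrableOn (fun x => exp (9 / 2) * exp (-3 * x)) (Ioi t) :=
    (integrableOn_exp_mul_Ioi (by norm_num) t).const_mul _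
  calc 1 - stdNormalCDF t ≤ ∫ x in Ioi t, exp (9 / 2) * exp (-3 * x) := by
        rw [one_sub_stdNormalCDF]
        exact setIntegral_mono (integrable_gaussianPDFReal 0 1).integrableOn hint
          gaussianPDFReal_zero_one_le
    _ = exp (9 / 2) * (exp (-3 * t) / 3) := by
        rw [integral_const_mul, integral_exp_mul_Ioi (by norm_num)]
        ring
    _ ≤ exp (9 / 2) * exp (-3 * t) := by
        gcongr
        linarith [exp_pos (-3 * t)]

lemma tendsto_exp_two_mul_mul_one_sub_stdNormalCDF :
    Tendsto (fun y => exp (2 * y) * (1 - stdNormalCDF y)) atTop (𝓝 0) := by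
  have hbound : Tendsto (fun y => exp (9 / 2) * exp (-y)) atTop (𝓝 0) := by
    simpa using tendsto_exp_neg_atTop_nhds_zero.const_mul (exp (9 / 2))
  refine tendsto_of_tendsto_of_tendsto_of_le_of_le tendsto_const_nhds hbound
    (fun y => (mul_pos (exp_pos _) (sub_pos.2 (stdNormalCDF_lt_one y))).le) fun y => ?_
  calc exp (2 * y) * (1 - stdNormalCDF y) ≤ exp (2 * y) * (exp (9 / 2) * exp (-3 * y)) := by
        gcongr
        exact one_sub_stdNormalCDF_le y
    _ = exp (9 / 2) * exp (-y) := by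
        rw [mul_left_comm, ← exp_add]
        ring_nf

section

variable {F : ℝ → ℝ}

noncomputable def condMeanRatio (F : ℝ → ℝ) (y : ℝ) : ℝ :=
  (-exp (-y) * F (y - 1) + exp y * (1 - F (y + 1)))
    / (exp (-y) * F (y - 1) + exp y * (1 - F (y + 1)))

lemma abs_neg_add_div_add_lt_one {a b : ℝ} (ha : 0 < a) (hb : 0 < b) :
    |(-a + b) / (a + b)| < 1 := by
  rw [abs_div, abs_of_pos (add_pos ha hb), div_lt_one (add_pos ha hb), abs_lt]
  constructor <;> linarith

lemma abs_condMeanRatio_lt_one (hpos : ∀ y, 0 < F y) (hlt : ∀ y, F y < 1) (y : ℝ) :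
    |condMeanRatio F y| < 1 := by
  rw [condMeanRatio, neg_mul]
  exact abs_neg_add_div_add_lt_one (mul_pos (exp_pos _) (hpos _))
    (mul_pos (exp_pos _) (sub_pos.2 (hlt _)))

lemma condMeanRatio_neg (hF : ∀ y, F (-y) = 1 - F y) (y : ℝ) :
    condMeanRatio F (-y) = -condMeanRatio F y := by
  rw [condMeanRatio, condMeanRatio, neg_neg, show -y - 1 = -(y + 1) by ring,
    show -y + 1 = -(y - 1) by ring, hF, hF]
  ring

lemma condMeanRatio_eq_div (y : ℝ) :
    condMeanRatio F y = (exp (2 * y) * (1 - F (y + 1)) - F (y - 1))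
      / (F (y - 1) + exp (2 * y) * (1 - F (y + 1))) := by
  rw [condMeanRatio, ← mul_div_mul_left _ _ (exp_pos y).ne', two_mul, exp_add, exp_neg]
  field_simp
  ring

lemma tendsto_condMeanRatio_atTop
    (htail : Tendsto (fun y => exp (2 * y) * (1 - F y)) atTop (𝓝 0)) :
    Tendsto (condMeanRatio F) atTop (𝓝 (-1)) := by
  have hF : Tendsto F atTop (𝓝 1) := by
    have h := (tendsto_exp_neg_atTop_nhds_zero.comp (tendsto_id.const_mul_atTop two_pos)).mul htail
    rw [zero_mul] at h
    have h' : Tendsto (fun y => 1 - F y) atTop (𝓝 0) := h.congr fun y => by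
      simp only [Function.comp_apply, id, exp_neg, inv_mul_cancel_left₀ (exp_pos _).ne']
    simpa using h'.const_sub 1
  have hshift : Tendsto (fun y => exp (2 * y) * (1 - F (y + 1))) atTop (𝓝 0) := by
    have h := (htail.comp (tendsto_atTop_add_const_right _ 1 tendsto_id)).const_mul (exp (-2))
    rw [mul_zero] at h
    refine h.congr fun y => ?_
    rw [Function.comp_apply, id, ← mul_assoc, ← exp_add]
    ring_nf
  have hF' : Tendsto (fun y => F (y - 1)) atTop (𝓝 1) :=
    hF.comp (tendsto_atTop_add_const_right _ _ tendsto_id)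
  have h := (hshift.sub hF').div (hF'.add hshift) (by norm_num)
  rw [zero_sub, add_zero, div_one] at h
  exact h.congr fun y => (condMeanRatio_eq_div y).symm

lemma tendsto_condMeanRatio_atBot (hF : ∀ y, F (-y) = 1 - F y)
    (htail : Tendsto (fun y => exp (2 * y) * (1 - F y)) atTop (𝓝 0)) :
    Tendsto (condMeanRatio F) atBot (𝓝 1) := by
  have h := ((tendsto_condMeanRatio_atTop htail).comp tendsto_neg_atBot_atTop).neg
  simpa [Function.comp_def, condMeanRatio_neg hF] using h

end

theorem conditional_mean_function_bounded
    (Φ : ℝ → ℝ)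
    (hΦ : ∀ y : ℝ, Φ y = ∫ x in Set.Iic y, (2 * π)⁻¹ ^ ((1:ℝ)/2) * Real.exp (-x ^ 2 / 2))
    (g : ℝ → ℝ)
    (hg : ∀ y : ℝ, g y =
      (-Real.exp (-y) * Φ (y - 1) + Real.exp y * (1 - Φ (y + 1)))
        / (Real.exp (-y) * Φ (y - 1) + Real.exp y * (1 - Φ (y + 1)))) :
    (∃ C : ℝ, ∀ y : ℝ, |g y| ≤ C) ∧
    (∀ y : ℝ, |g y| < 1) ∧
    Tendsto g atTop (nhds (-1)) ∧
    Tendsto g atBot (nhds 1) := by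
  have hΦ_eq : Φ = stdNormalCDF := funext fun y => by
    simp only [hΦ, stdNormalCDF, gaussianPDFReal_zero_one]
  have hg_eq : g = condMeanRatio stdNormalCDF := funext fun y => by
    rw [hg, hΦ_eq, condMeanRatio]
  subst hg_eq
  have habs := abs_condMeanRatio_lt_one stdNormalCDF_pos stdNormalCDF_lt_one
  exact ⟨⟨1, fun y => (habs y).le⟩, habs,
    tendsto_condMeanRatio_atTop tendsto_exp_two_mul_mul_one_sub_stdNormalCDF,
    tendsto_condMeanRatio_atBot stdNormalCDF_neg tendsto_exp_two_mul_mul_one_sub_stdNormalCDF⟩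
end

section
/- Let γ > 0 and let ρ be a measure on ℝ with ∫ min(1,x²)ρ(dx) < ∞. If ∫_{−∞}^0 ∫_ℝ min(1, |((1−s)^γ − (−s)^γ)·x|²) ρ(dx) ds < ∞, then ∫_{|γx|>1} (|γx|^{1/(1−γ)} − 1) ρ(dx) < ∞; in particular, if additionally γ < 1, then ∫_{|x|>1} |x|^{1/(1−γ)} ρ(dx) < ∞. -/
open MeasureTheory Set
open scoped ENNReal

/-!
For `0 < γ < 1`, concavity of `t ↦ t ^ γ` gives `(1 - s) ^ γ - (-s) ^ γ ≥ γ (1 - s) ^ (γ - 1)`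
for `s ≤ 0`. Hence if `1 < |γ x|`, the inner integrand equals `1` for all
`s ∈ [1 - |γ x| ^ (1 / (1 - γ)), 0]`, so the `s`-integral is at least
`|γ x| ^ (1 / (1 - γ)) - 1`; integrating in `x` (Tonelli, on a set of finite `ρ`-measure)
gives the first bound. The second follows since `|x| ^ p ≤ γ ^ (-p) (1 + (|γ x| ^ p - 1)⁺)`
and `ρ` gives finite mass to `{1 < |x|}`. For `γ ≥ 1` the exponent `1 / (1 - γ)` is `≤ 0`
(it is `0` at `γ = 1`), so the first integrand vanishes.
-/

lemma Real.rpow_sub_rpow_ge_mul_rpow_sub_one {γ a b : ℝ} (hγ0 : 0 ≤ γ) (hγ1 : γ ≤ 1)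
    (ha : 0 ≤ a) (hb : 0 < b) : γ * b ^ (γ - 1) * (b - a) ≤ b ^ γ - a ^ γ := by
  have hbernoulli := rpow_one_add_le_one_add_mul_self (s := a / b - 1)
    (by linarith [div_nonneg ha hb.le]) hγ0 hγ1
  have hbγ : 0 < b ^ γ := Real.rpow_pos_of_pos hb γ
  rw [add_sub_cancel, Real.div_rpow ha hb.le, div_le_iff₀ hbγ] at hbernoulli
  have hb_sub_one : b ^ (γ - 1) * b = b ^ γ := by
    rw [Real.rpow_sub_one hb.ne', div_mul_cancel₀ _ hb.ne']
  have : γ * b ^ (γ - 1) * (b - a) = γ * b ^ γ - γ * (a / b) * b ^ γ := by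
    rw [← hb_sub_one]; field_simp
  nlinarith

lemma rpow_one_sub_sub_rpow_neg_ge {γ s : ℝ} (hγ0 : 0 ≤ γ) (hγ1 : γ ≤ 1) (hs : s ≤ 0) :
    γ * (1 - s) ^ (γ - 1) ≤ (1 - s) ^ γ - (-s) ^ γ := by
  simpa using Real.rpow_sub_rpow_ge_mul_rpow_sub_one hγ0 hγ1 (neg_nonneg.2 hs)
    (by linarith : (0 : ℝ) < 1 - s)

lemma one_le_abs_rpow_one_sub_sub_rpow_neg_mul {γ x s : ℝ} (hγ : 0 < γ) (hγ1 : γ < 1)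
    (hx : x ≠ 0) (hs : 1 - |γ * x| ^ (1 / (1 - γ)) ≤ s) (hs0 : s ≤ 0) :
    1 ≤ |((1 - s) ^ γ - (-s) ^ γ) * x| := by
  set c := |γ * x| with hc
  have hc_eq : c = γ * |x| := by rw [hc, abs_mul, abs_of_pos hγ]
  have hc0 : 0 < c := by rw [hc_eq]; positivity
  have hT : (c ^ (1 / (1 - γ))) ^ (γ - 1) = c⁻¹ := by
    rw [← Real.rpow_mul hc0.le, show 1 / (1 - γ) * (γ - 1) = -1 by field_simp [sub_ne_zero.2 hγ1.ne']; ring,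
      Real.rpow_neg_one]
  have hpow : c⁻¹ ≤ (1 - s) ^ (γ - 1) :=
    hT ▸ Real.rpow_le_rpow_of_nonpos (by linarith) (by linarith) (by linarith)
  calc (1 : ℝ) = γ * c⁻¹ * |x| := by rw [hc_eq]; field_simp
    _ ≤ γ * (1 - s) ^ (γ - 1) * |x| := by gcongr
    _ ≤ ((1 - s) ^ γ - (-s) ^ γ) * |x| := by
        gcongr; exact rpow_one_sub_sub_rpow_neg_ge hγ.le hγ1.le hs0
    _ ≤ |((1 - s) ^ γ - (-s) ^ γ) * x| := by
        rw [abs_mul]; gcongr; exact le_abs_self _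

lemma ofReal_abs_mul_rpow_sub_one_le_setLIntegral {γ x : ℝ} (hγ : 0 < γ) (hx : 1 < |γ * x|) :
    ENNReal.ofReal (|γ * x| ^ (1 / (1 - γ)) - 1) ≤
      ∫⁻ s in Iic 0, ENNReal.ofReal (min 1 (|((1 - s) ^ γ - (-s) ^ γ) * x| ^ 2)) := by
  rcases lt_or_ge γ 1 with hγ1 | hγ1
  · have hx0 : x ≠ 0 := by rintro rfl; simp at hx; linarith
    set T := |γ * x| ^ (1 / (1 - γ))
    calc ENNReal.ofReal (T - 1) = ∫⁻ _ in Icc (1 - T) 0, 1 := by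
          rw [setLIntegral_one, Real.volume_Icc]; ring_nf
      _ ≤ ∫⁻ s in Icc (1 - T) 0,
            ENNReal.ofReal (min 1 (|((1 - s) ^ γ - (-s) ^ γ) * x| ^ 2)) := by
          refine setLIntegral_mono (by fun_prop) fun s hs => ?_
          have h1 := one_le_abs_rpow_one_sub_sub_rpow_neg_mul hγ hγ1 hx0 hs.1 hs.2
          rw [← ENNReal.ofReal_one]
          exact ENNReal.ofReal_le_ofReal (le_min le_rfl (one_le_pow₀ h1))
      _ ≤ _ := lintegral_mono_set fun s hs => hs.2
  · have hp : 1 / (1 - γ) ≤ 0 := div_nonpos_of_nonneg_of_nonpos zero_le_one (by linarith)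
    rw [ENNReal.ofReal_of_nonpos (by linarith [Real.rpow_le_one_of_one_le_of_nonpos hx.le hp])]
    exact zero_le

lemma measure_lt_abs_lt_top_of_lintegral_min_one_sq_lt_top {ρ : Measure ℝ}
    (hρ : ∫⁻ x, ENNReal.ofReal (min 1 (x ^ 2)) ∂ρ < ⊤) {ε : ℝ} (hε : 0 < ε) :
    ρ {x | ε < |x|} < ⊤ := by
  have hc : ENNReal.ofReal (min 1 (ε ^ 2)) ≠ 0 := by
    rw [ne_eq, ENNReal.ofReal_eq_zero, not_le]; positivity
  calc ρ {x | ε < |x|}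
      ≤ ρ {x | ENNReal.ofReal (min 1 (ε ^ 2)) ≤ ENNReal.ofReal (min 1 (x ^ 2))} := by
        refine measure_mono fun x (hx : ε < |x|) => ENNReal.ofReal_le_ofReal ?_
        have : ε ^ 2 ≤ x ^ 2 := by rw [← sq_abs x]; gcongr
        gcongr
    _ ≤ (∫⁻ x, ENNReal.ofReal (min 1 (x ^ 2)) ∂ρ) / ENNReal.ofReal (min 1 (ε ^ 2)) :=
        meas_ge_le_lintegral_div (by fun_prop) hc ENNReal.ofReal_ne_top
    _ < ⊤ := ENNReal.div_lt_top hρ.ne hc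

lemma setLIntegral_lintegral_le_lintegral_lintegral {α β : Type*} [MeasurableSpace α]
    [MeasurableSpace β] {μ : Measure α} [SFinite μ] {ρ : Measure β} {S : Set β} (hS : ρ S ≠ ⊤)
    {f : α → β → ℝ≥0∞} (hf : Measurable (Function.uncurry f)) :
    ∫⁻ x in S, ∫⁻ s, f s x ∂μ ∂ρ ≤ ∫⁻ s, ∫⁻ x, f s x ∂ρ ∂μ := by
  have : IsFiniteMeasure (ρ.restrict S) := isFiniteMeasure_restrict.2 hS
  calc ∫⁻ x in S, ∫⁻ s, f s x ∂μ ∂ρ = ∫⁻ s, ∫⁻ x in S, f s x ∂ρ ∂μ :=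
        lintegral_lintegral_swap (hf.comp measurable_swap).aemeasurable
    _ ≤ ∫⁻ s, ∫⁻ x, f s x ∂ρ ∂μ := lintegral_mono fun s => setLIntegral_le_lintegral S _

lemma ofReal_abs_rpow_le {γ : ℝ} (hγ : 0 < γ) (x p : ℝ) :
    ENNReal.ofReal (|x| ^ p) ≤
      ENNReal.ofReal (γ⁻¹ ^ p) * (1 + ENNReal.ofReal (|γ * x| ^ p - 1)) := by
  have hsplit : |x| ^ p = γ⁻¹ ^ p * (1 + (|γ * x| ^ p - 1)) := by
    rw [add_sub_cancel, abs_mul, abs_of_pos hγ, Real.mul_rpow hγ.le (abs_nonneg x),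
      ← mul_assoc, ← Real.mul_rpow (inv_nonneg.2 hγ.le) hγ.le, inv_mul_cancel₀ hγ.ne',
      Real.one_rpow, one_mul]
  rw [hsplit, ENNReal.ofReal_mul (by positivity)]
  gcongr
  exact (ENNReal.ofReal_add_le).trans_eq (by rw [ENNReal.ofReal_one])

lemma setLIntegral_abs_rpow_lt_top {ρ : Measure ℝ} {γ p : ℝ} (hγ : 0 < γ) (hp : 0 ≤ p)
    (htail : ρ {x | 1 < |x|} < ⊤)
    (h : ∫⁻ x in {x | 1 < |γ * x|}, ENNReal.ofReal (|γ * x| ^ p - 1) ∂ρ < ⊤) :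
    ∫⁻ x in {x | 1 < |x|}, ENNReal.ofReal (|x| ^ p) ∂ρ < ⊤ := by
  set g : ℝ → ℝ≥0∞ := fun x => ENNReal.ofReal (|γ * x| ^ p - 1)
  have hsupp : g.support ⊆ {x | 1 < |γ * x|} := fun x hx => by
    by_contra hle
    exact hx (ENNReal.ofReal_of_nonpos
      (by linarith [Real.rpow_le_one (abs_nonneg _) (not_lt.1 hle) hp]))
  have hg : ∫⁻ x in {x | 1 < |x|}, g x ∂ρ < ⊤ :=
    (setLIntegral_le_lintegral _ _).trans_lt
      ((setLIntegral_eq_of_support_subset hsupp).symm ▸ h)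
  calc ∫⁻ x in {x | 1 < |x|}, ENNReal.ofReal (|x| ^ p) ∂ρ
      ≤ ∫⁻ x in {x | 1 < |x|}, ENNReal.ofReal (γ⁻¹ ^ p) * (1 + g x) ∂ρ :=
        lintegral_mono fun x => ofReal_abs_rpow_le hγ x p
    _ = ENNReal.ofReal (γ⁻¹ ^ p) * (ρ {x | 1 < |x|} + ∫⁻ x in {x | 1 < |x|}, g x ∂ρ) := by
        rw [lintegral_const_mul _ (by fun_prop), lintegral_add_left measurable_const, setLIntegral_one]
    _ < ⊤ := ENNReal.mul_lt_top ENNReal.ofReal_lt_top (ENNReal.add_lt_top.2 ⟨htail, hg⟩)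

theorem fractional_levy_necessity_tail
    (γ : ℝ) (hγ : 0 < γ)
    (ρ : Measure ℝ)
    (hlevy : ∫⁻ x, ENNReal.ofReal (min 1 (x ^ 2)) ∂ρ < ⊤)
    (hfin : ∫⁻ s in Set.Iic (0:ℝ),
        ∫⁻ x, ENNReal.ofReal (min 1 (|((1 - s) ^ γ - (-s) ^ γ) * x| ^ 2)) ∂ρ < ⊤) :
    (∫⁻ x in {x : ℝ | 1 < |γ * x|}, ENNReal.ofReal (|γ * x| ^ (1 / (1 - γ)) - 1) ∂ρ < ⊤)
    ∧ (γ < 1 →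
        ∫⁻ x in {x : ℝ | 1 < |x|}, ENNReal.ofReal (|x| ^ (1 / (1 - γ))) ∂ρ < ⊤) := by
  have hS_eq : {x : ℝ | 1 < |γ * x|} = {x | γ⁻¹ < |x|} := by
    ext x; rw [mem_ofPred_eq, mem_ofPred_eq, abs_mul, abs_of_pos hγ, inv_lt_iff_one_lt_mul₀' hγ]
  have hS : ρ {x : ℝ | 1 < |γ * x|} ≠ ⊤ :=
    hS_eq ▸ (measure_lt_abs_lt_top_of_lintegral_min_one_sq_lt_top hlevy (inv_pos.2 hγ)).ne
  have htail : ∫⁻ x in {x : ℝ | 1 < |γ * x|},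
      ENNReal.ofReal (|γ * x| ^ (1 / (1 - γ)) - 1) ∂ρ < ⊤ :=
    calc _ ≤ ∫⁻ x in {x : ℝ | 1 < |γ * x|}, (∫⁻ s in Iic 0,
              ENNReal.ofReal (min 1 (|((1 - s) ^ γ - (-s) ^ γ) * x| ^ 2))) ∂ρ :=
          setLIntegral_mono' (measurableSet_lt measurable_const (by fun_prop))
            fun x hx => ofReal_abs_mul_rpow_sub_one_le_setLIntegral hγ hx
      _ ≤ _ := setLIntegral_lintegral_le_lintegral_lintegral hS  (by fun_prop)
      _ < ⊤ := hfin
  refine ⟨htail, fun hγ1 => setLIntegral_abs_rpow_lt_top hγ (by rw [one_div]; bound) ?_ htail⟩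
  exact measure_lt_abs_lt_top_of_lintegral_min_one_sq_lt_top hlevy one_pos
end
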